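/- arXiv:2404.11607 — 2 statements merged into one kernel-verified Lean document; each statement's English description precedes it below -/
import Mathlib

section
/- The Subset Selection mechanism is ε-locally differentially private: for every pair of inputs z, z' ∈ Z and every subset S ⊆ Z, the output probabilities satisfy P_z(S) ≤ e^ε · P_{z'}(S). -/
/-- The parameter `d = ⌈s / (e^ε + 1)⌉` of the Subset Selection mechanism. -/
noncomputable def ssD (s : ℕ) (ε : ℝ) : ℕ := ⌈(s : ℝ) / (Real.exp ε + 1)⌉₊

/-- The parameter `p = d e^ε / (d e^ε + s - d)` of the Subset Selection mechanism. -/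
noncomputable def ssp (s : ℕ) (ε : ℝ) : ℝ :=
  (ssD s ε : ℝ) * Real.exp ε / ((ssD s ε : ℝ) * Real.exp ε + (s : ℝ) - (ssD s ε : ℝ))

/-- The probability mass `P_z(S)` of the Subset Selection mechanism with input `z`,
identifying the domain `{1, …, s}` with `Fin s`. -/
noncomputable def ssP (s : ℕ) (ε : ℝ) (z : Fin s) (S : Finset (Fin s)) : ℝ :=
  if S.card = ssD s ε then
    if z ∈ S then ssp s ε / ((s - 1).choose (ssD s ε - 1) : ℝ)
    else (1 - ssp s ε) / ((s - 1).choose (ssD s ε) : ℝ)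
  else 0

/-! Choosing `p / (1 - p) = d e^ε / (s - d)` exactly cancels the ratio
`C(s-1, d-1) / C(s-1, d) = d / (s - d)` of the two binomial normalisers. Hence a size-`d` subset
has mass `c e^ε` under every input it contains and mass `c` under every input it misses, for one
constant `c ≥ 0`, and any two of these masses differ by a factor of at most `e^ε`. -/

lemma ssD_pos {s : ℕ} (hs : 0 < s) (ε : ℝ) : 0 < ssD s ε := by
  unfold ssD
  rw [Nat.ceil_pos]
  positivity

lemma ssD_lt {s : ℕ} (hs : 2 ≤ s) {ε : ℝ} (hε : 0 ≤ ε) : ssD s ε < s := by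
  have hs' : (2 : ℝ) ≤ s := by exact_mod_cast hs
  have h2 : (2 : ℝ) ≤ Real.exp ε + 1 := by linarith [Real.one_le_exp hε]
  have hceil : (s : ℝ) / (Real.exp ε + 1) ≤ ((s - 1 : ℕ) : ℝ) := by
    rw [Nat.cast_sub (by omega), Nat.cast_one]
    calc (s : ℝ) / (Real.exp ε + 1) ≤ s / 2 := div_le_div_of_nonneg_left (by positivity) two_pos h2
      _ ≤ s - 1 := by linarith
  have := Nat.ceil_le.mpr hceil
  unfold ssD
  omega

lemma cast_choose_sub_one_sub_one_mul {s d : ℕ} (hs : 0 < s) (hd : 0 < d) :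
    ((s - 1).choose (d - 1) : ℝ) * s = s.choose d * d := by
  obtain ⟨n, rfl⟩ := Nat.exists_eq_add_of_lt hs
  obtain ⟨k, rfl⟩ := Nat.exists_eq_add_of_lt hd
  simpa [mul_comm] using congrArg (Nat.cast (R := ℝ)) (Nat.add_one_mul_choose_eq n k)

lemma cast_choose_sub_one_mul {s : ℕ} (hs : 0 < s) (d : ℕ) :
    ((s - 1).choose d : ℝ) * s = s.choose d * (s - d : ℕ) := by
  obtain ⟨n, rfl⟩ := Nat.exists_eq_add_of_lt hs
  simpa using congrArg (Nat.cast (R := ℝ)) (Nat.choose_mul_succ_eq n d)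

lemma ssP_eq_ite {s : ℕ} (hs : 2 ≤ s) {ε : ℝ} (hε : 0 ≤ ε) (z : Fin s) (S : Finset (Fin s)) :
    ssP s ε z S = if S.card = ssD s ε then
      (if z ∈ S then Real.exp ε else 1) *
        (s / (s.choose (ssD s ε) * (ssD s ε * Real.exp ε + (s - ssD s ε : ℕ)))) else 0 := by
  unfold ssP ssp
  set d := ssD s ε
  have hd : 0 < d := ssD_pos (by omega) ε
  have hds : d < s := ssD_lt hs hε
  have hdR : (1 : ℝ) ≤ d := by exact_mod_cast hd
  have hdsR : (d : ℝ) + 1 ≤ s := by exact_mod_cast hds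
  have hE := Real.exp_pos ε
  have hden : 0 < (d : ℝ) * Real.exp ε + (s - d) := by nlinarith
  have hC : (0 : ℝ) < s.choose d := by exact_mod_cast Nat.choose_pos hds.le
  have hC₁pos : (0 : ℝ) < (s - 1).choose (d - 1) := by exact_mod_cast Nat.choose_pos (by omega)
  have hC₂pos : (0 : ℝ) < (s - 1).choose d := by exact_mod_cast Nat.choose_pos (by omega)
  have hC₁ := cast_choose_sub_one_sub_one_mul (s := s) (by omega) hd
  have hC₂ := cast_choose_sub_one_mul (s := s) (by omega) d
  rw [Nat.cast_sub hds.le] at hC₂ ⊢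
  simp only [add_sub_assoc]
  split_ifs
  · field_simp
    linear_combination -hC₁
  · field_simp
    linear_combination -hC₂
  · rfl

/-- The Subset Selection mechanism is `ε`-locally differentially private:
for every pair of inputs `z, z'` and every subset `S`, `P_z(S) ≤ e^ε · P_{z'}(S)`. -/
theorem subsetSelection_LDP (s : ℕ) (hs : 2 ≤ s) (ε : ℝ) (hε : 0 < ε)
    (z z' : Fin s) (S : Finset (Fin s)) :
    ssP s ε z S ≤ Real.exp ε * ssP s ε z' S := by
  have hE : 1 ≤ Real.exp ε := Real.one_le_exp hε.le
  rw [ssP_eq_ite hs hε.le, ssP_eq_ite hs hε.le]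
  by_cases hS : S.card = ssD s ε
  · rw [if_pos hS, if_pos hS]
    set q := (s : ℝ) / (s.choose (ssD s ε) * (ssD s ε * Real.exp ε + (s - ssD s ε : ℕ)))
    have hq : 0 ≤ q := by positivity
    calc (if z ∈ S then Real.exp ε else 1) * q ≤ Real.exp ε * q := by
          gcongr; split_ifs <;> linarith
      _ ≤ Real.exp ε * ((if z' ∈ S then Real.exp ε else 1) * q) := by
          gcongr; exact le_mul_of_one_le_left hq (by split_ifs <;> linarith)
  · simp [hS]
end

section
/- Fix s ≥ 2, ε > 0, d = ⌈s/(e^ε+1)⌉ with d ≥ 2, and p = d·e^ε/(d·e^ε + s − d). Generate a random subset S of {1,…,s} as follows: independently, include the element 1 with probability p, and draw B a uniformly random (d−2)-element subset of {2,…,s}; let S' be the union of B and (if included) {1}; then, conditionally, draw a uniformly random (d − |S'|)-element subset F of {2,…,s} \ S' and set S = S' ∪ F. Then S is distributed exactly as the output SS(1) of the Subset Selection mechanism with input z = 1. -/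
open scoped ENNReal

/-- The uniform distribution over all `k`-element subsets of the finite set `T`
(junk value: the point mass at `∅` when there is no `k`-element subset of `T`). -/
noncomputable def uniformPowersetCard {α : Type*} (T : Finset α) (k : ℕ) : PMF (Finset α) :=
  if h : (T.powersetCard k).Nonempty then PMF.uniformOfFinset _ h else PMF.pure ∅

/-- A Bernoulli random Boolean which is `true` with probability `p ∈ [0, 1]`
(junk value: the point mass at `true` when `p > 1`). -/
noncomputable def bernoulliPMF (p : ℝ) : PMF Bool :=
  if h : ENNReal.ofReal p ≤ 1 then PMF.bernoulli p.toNNReal (ENNReal.coe_le_one_iff.mp h) else PMF.pure true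

/-!
Drawing a uniform `k`-subset `B` of `T` and then a uniform `(m - k)`-subset of `T \ B` yields a
uniform `m`-subset of `T`: every `m`-subset arises from exactly `C(m, k)` pairs, and
`C(n, m) C(m, k) = C(n, k) C(n - k, m - k)`. With `T = {x₁}ᶜ`, the branch without `x₁` is therefore
a uniform `d`-subset of `T`, and the branch with `x₁` is `x₁` together with a uniform
`(d - 1)`-subset of `T`. Mixing the two with weights `1 - p` and `p` is exactly `SS(x₁)`.
-/

open Finset

theorem PMF.bind_congr_support {α β : Type*} (p : PMF α) {f g : α → PMF β}
    (h : ∀ a ∈ p.support, f a = g a) : p.bind f = p.bind g := by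
  ext b
  refine tsum_congr fun a => ?_
  by_cases ha : a ∈ p.support
  · rw [h a ha]
  · rw [(p.apply_eq_zero_iff a).2 ha, zero_mul, zero_mul]

section UniformPowersetCard

variable {α : Type*} {T : Finset α} {k m : ℕ}

theorem mem_support_uniformPowersetCard (hk : k ≤ T.card) {B : Finset α} :
    B ∈ (uniformPowersetCard T k).support ↔ B ∈ T.powersetCard k := by
  rw [uniformPowersetCard, dif_pos (powersetCard_nonempty.2 hk),
    PMF.mem_support_uniformOfFinset_iff]

variable [DecidableEq α]

theorem uniformPowersetCard_apply (hk : k ≤ T.card) (B : Finset α) :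
    uniformPowersetCard T k B =
      if B ∈ T.powersetCard k then ((T.card.choose k : ℕ) : ℝ≥0∞)⁻¹ else 0 := by
  rw [uniformPowersetCard, dif_pos (powersetCard_nonempty.2 hk), PMF.uniformOfFinset_apply,
    card_powersetCard]
  congr

theorem map_union_uniformPowersetCard_apply (A : Finset α) (hAT : Disjoint A T)
    (hk : k ≤ T.card) (S : Finset α) :
    ((uniformPowersetCard T k).map (A ∪ ·)) S =
      if A ⊆ S ∧ S \ A ∈ T.powersetCard k then ((T.card.choose k : ℕ) : ℝ≥0∞)⁻¹ else 0 := by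
  rw [PMF.map_apply, tsum_eq_single (S \ A)]
  · by_cases hAS : A ⊆ S
    · simp only [union_sdiff_of_subset hAS, hAS, true_and, if_true,
        uniformPowersetCard_apply hk]
    · have hS : S ≠ A ∪ S \ A := fun h => hAS (h ▸ subset_union_left)
      simp only [hS, hAS, false_and, if_false]
  · intro F hF
    split_ifs with hS
    · rw [uniformPowersetCard_apply hk, if_neg fun hFmem => hF ?_]
      rw [hS, union_sdiff_cancel_left (hAT.mono_right (mem_powersetCard.1 hFmem).1)]
    · rfl

theorem Finset.sdiff_mem_powersetCard_sdiff_iff {B S : Finset α} (hBT : B ⊆ T) (hBS : B ⊆ S)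
    (hBm : B.card ≤ m) :
    S \ B ∈ (T \ B).powersetCard (m - B.card) ↔ S ∈ T.powersetCard m := by
  have hcard := card_le_card hBS
  have hsub : S \ B ⊆ T \ B ↔ S ⊆ T := by
    constructor
    · intro h x hx
      by_cases hxB : x ∈ B
      · exact hBT hxB
      · exact (mem_sdiff.1 (h (mem_sdiff.2 ⟨hx, hxB⟩))).1
    · exact fun h => sdiff_subset_sdiff h subset_rfl
  rw [mem_powersetCard, mem_powersetCard, hsub, card_sdiff_of_subset hBS]
  constructor <;> rintro ⟨h1, h2⟩ <;> exact ⟨h1, by omega⟩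

theorem ENNReal.natCast_mul_inv_mul_inv {a b c d : ℕ} (h : a * b = c * d) (hb : b ≠ 0) :
    (b : ℝ≥0∞) * ((c : ℝ≥0∞)⁻¹ * (d : ℝ≥0∞)⁻¹) = (a : ℝ≥0∞)⁻¹ := by
  rw [← ENNReal.mul_inv (Or.inr (natCast_ne_top d)) (Or.inl (natCast_ne_top c)), ← Nat.cast_mul,
    ← h, Nat.cast_mul, ENNReal.mul_inv (Or.inr (natCast_ne_top b)) (Or.inl (natCast_ne_top a)),
    mul_left_comm, ENNReal.mul_inv_cancel (by exact_mod_cast hb) (natCast_ne_top b), mul_one]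

theorem bind_map_union_uniformPowersetCard (hkm : k ≤ m) (hm : m ≤ T.card) :
    (uniformPowersetCard T k).bind
        (fun B => (uniformPowersetCard (T \ B) (m - B.card)).map (B ∪ ·)) =
      uniformPowersetCard T m := by
  have hk : k ≤ T.card := hkm.trans hm
  ext S
  have hterm : ∀ B, uniformPowersetCard T k B *
      ((uniformPowersetCard (T \ B) (m - B.card)).map (B ∪ ·)) S =
        if B ∈ S.powersetCard k ∧ S ∈ T.powersetCard m then
          ((T.card.choose k : ℕ) : ℝ≥0∞)⁻¹ * (((T.card - k).choose (m - k) : ℕ) : ℝ≥0∞)⁻¹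
        else 0 := by
    intro B
    rw [uniformPowersetCard_apply hk]
    by_cases hB : B ∈ T.powersetCard k
    · obtain ⟨hBT, hBk⟩ := mem_powersetCard.1 hB
      rw [if_pos hB, map_union_uniformPowersetCard_apply B disjoint_sdiff
        (by rw [card_sdiff_of_subset hBT]; omega)]
      by_cases hBS : B ⊆ S
      · simp only [sdiff_mem_powersetCard_sdiff_iff (m := m) hBT hBS (by omega)]
        simp [card_sdiff_of_subset hBT, hBk, hBS, mem_powersetCard]
      · simp [hBS, mem_powersetCard]
    · rw [if_neg hB, zero_mul, if_neg]
      rintro ⟨hBS, hS⟩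
      exact hB (mem_powersetCard.2
        ⟨(mem_powersetCard.1 hBS).1.trans (mem_powersetCard.1 hS).1, (mem_powersetCard.1 hBS).2⟩)
  rw [PMF.bind_apply, tsum_congr hterm,
    tsum_eq_sum (s := S.powersetCard k) fun B hB => if_neg (hB ∘ And.left),
    uniformPowersetCard_apply hm]
  by_cases hS : S ∈ T.powersetCard m
  · obtain ⟨-, hSm⟩ := mem_powersetCard.1 hS
    simp only [hS, and_true]
    rw [sum_ite_of_true fun _ h => h, sum_const, card_powersetCard, hSm, nsmul_eq_mul]
    exact ENNReal.natCast_mul_inv_mul_inv (Nat.choose_mul hkm) (Nat.choose_pos hkm).ne'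
  · simp [hS]

theorem bind_map_insert_union_uniformPowersetCard {x : α} (hx : x ∉ T) (hkm : k ≤ m - 1)
    (hm : m - 1 ≤ T.card) :
    (uniformPowersetCard T k).bind (fun B =>
        (uniformPowersetCard (T \ insert x B) (m - (insert x B).card)).map (insert x B ∪ ·)) =
      (uniformPowersetCard T (m - 1)).map (insert x) := by
  have hk : k ≤ T.card := hkm.trans hm
  calc _ = (uniformPowersetCard T k).bind (fun B =>
          ((uniformPowersetCard (T \ B) (m - 1 - B.card)).map (B ∪ ·)).map (insert x)) := by
        refine PMF.bind_congr_support _ fun B hB => ?_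
        have hxB : x ∉ B := fun h =>
          hx ((mem_powersetCard.1 ((mem_support_uniformPowersetCard hk).1 hB)).1 h)
        rw [sdiff_insert_of_notMem hx, card_insert_of_notMem hxB, PMF.map_comp, Nat.sub_sub,
          add_comm]
        congr 1
        funext F
        exact insert_union x B F
    _ = _ := by rw [← PMF.map_bind, bind_map_union_uniformPowersetCard hkm hm]

end UniformPowersetCard

section ComplSingleton

variable {α : Type*} [Fintype α] [DecidableEq α] (x : α) {k : ℕ}

theorem Finset.card_compl_singleton : ({x}ᶜ : Finset α).card = Fintype.card α - 1 := by
  rw [card_compl, card_singleton]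

theorem uniformPowersetCard_compl_singleton_apply (hk : k < Fintype.card α) (S : Finset α) :
    uniformPowersetCard {x}ᶜ k S =
      if x ∉ S ∧ S.card = k then (((Fintype.card α - 1).choose k : ℕ) : ℝ≥0∞)⁻¹ else 0 := by
  rw [uniformPowersetCard_apply (by rw [card_compl_singleton]; omega), card_compl_singleton]
  simp only [mem_powersetCard, subset_compl_singleton]

theorem map_insert_uniformPowersetCard_compl_singleton_apply (hk : k < Fintype.card α)
    (S : Finset α) :
    ((uniformPowersetCard {x}ᶜ k).map (insert x)) S =
      if x ∈ S ∧ S.card = k + 1 then (((Fintype.card α - 1).choose k : ℕ) : ℝ≥0∞)⁻¹ else 0 := by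
  rw [show insert x = ({x} ∪ ·) from funext fun B => insert_eq x B,
    map_union_uniformPowersetCard_apply _ disjoint_compl_right
      (by rw [card_compl_singleton]; omega), card_compl_singleton]
  by_cases hxS : x ∈ S
  · have hS : 1 ≤ S.card := card_pos.2 ⟨x, hxS⟩
    simp [hxS, sdiff_singleton_eq_erase, card_erase_of_mem, Nat.sub_eq_iff_eq_add hS]
  · simp [hxS]

end ComplSingleton

theorem ssD_lt_self {s : ℕ} {ε : ℝ} (hs : 2 ≤ s) (hε : 0 < ε) : ssD s ε < s := by
  have hexp : 1 < Real.exp ε := Real.one_lt_exp_iff.2 hε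
  have hs' : (2 : ℝ) ≤ s := by exact_mod_cast hs
  have hd : ssD s ε ≤ s - 1 := by
    rw [ssD, Nat.ceil_le, Nat.cast_sub (by omega), Nat.cast_one]
    calc (s : ℝ) / (Real.exp ε + 1) ≤ s / 2 :=
          div_le_div_of_nonneg_left (by positivity) two_pos (by linarith)
      _ ≤ s - 1 := by linarith
  omega

theorem ssp_nonneg {s : ℕ} {ε : ℝ} (hd : ssD s ε ≤ s) : 0 ≤ ssp s ε := by
  have : (ssD s ε : ℝ) ≤ s := by exact_mod_cast hd
  exact div_nonneg (by positivity) (by nlinarith [Real.exp_pos ε])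

theorem ssp_le_one {s : ℕ} {ε : ℝ} (hd : ssD s ε ≤ s) : ssp s ε ≤ 1 := by
  have : (ssD s ε : ℝ) ≤ s := by exact_mod_cast hd
  exact div_le_one_of_le₀ (by linarith) (by nlinarith [Real.exp_pos ε])

theorem ofReal_ssP {s : ℕ} {ε : ℝ} (hd : ssD s ε < s) (z : Fin s) (S : Finset (Fin s)) :
    ENNReal.ofReal (ssP s ε z S) =
      (1 - ENNReal.ofReal (ssp s ε)) *
          (if z ∉ S ∧ S.card = ssD s ε then (((s - 1).choose (ssD s ε) : ℕ) : ℝ≥0∞)⁻¹ else 0) +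
        ENNReal.ofReal (ssp s ε) *
          (if z ∈ S ∧ S.card = ssD s ε then (((s - 1).choose (ssD s ε - 1) : ℕ) : ℝ≥0∞)⁻¹
            else 0) := by
  have hp := ssp_nonneg hd.le
  have hC : 0 < (s - 1).choose (ssD s ε) := Nat.choose_pos (by omega)
  have hC' : 0 < (s - 1).choose (ssD s ε - 1) := Nat.choose_pos (by omega)
  by_cases hcard : S.card = ssD s ε
  · by_cases hz : z ∈ S
    · rw [ssP, if_pos hcard, if_pos hz, if_neg fun h => h.1 hz, if_pos ⟨hz, hcard⟩,
        ENNReal.ofReal_div_of_pos (Nat.cast_pos.2 hC'), ENNReal.ofReal_natCast, div_eq_mul_inv,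
        mul_zero, zero_add]
    · rw [ssP, if_pos hcard, if_neg hz, if_pos ⟨hz, hcard⟩, if_neg fun h => hz h.1,
        ENNReal.ofReal_div_of_pos (Nat.cast_pos.2 hC), ENNReal.ofReal_natCast, div_eq_mul_inv,
        ENNReal.ofReal_sub _ hp, ENNReal.ofReal_one, mul_zero, add_zero]
  · simp [ssP, hcard]

/-- generate a random subset `S` of `{1, …, s}` as follows: independently, include
the element `1` with probability `p` and draw `B` a uniformly random `(d − 2)`-element subset of
`{2, …, s}`; let `S'` be the union of `B` and (if included) `{1}`; then, conditionally, draw a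
uniformly random `(d − |S'|)`-element subset `F` of `{2, …, s} \ S'` and set `S = S' ∪ F`.
Then `S` is distributed exactly as the output `SS(1)` of the Subset Selection mechanism with
input `z = 1`. Here `{1, …, s}` is identified with `Fin s`, `x1 : Fin s` plays the role of the
element `1`, and `{2, …, s}` is its complement `{x1}ᶜ`. -/
theorem coupled_construction_distributed_as_subsetSelection
    (s : ℕ) (hs : 2 ≤ s) (ε : ℝ) (hε : 0 < ε) (hd2 : 2 ≤ ssD s ε) (x1 : Fin s) :
    ∀ S : Finset (Fin s),
      ((bernoulliPMF (ssp s ε)).bind fun inc =>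
        (uniformPowersetCard ({x1}ᶜ : Finset (Fin s)) (ssD s ε - 2)).bind fun B =>
          (uniformPowersetCard
              (({x1}ᶜ : Finset (Fin s)) \ (if inc then insert x1 B else B))
              (ssD s ε - (if inc then insert x1 B else B).card)).map
            fun F => (if inc then insert x1 B else B) ∪ F) S
        = ENNReal.ofReal (ssP s ε x1 S) := by
  intro S
  have hd := ssD_lt_self hs hε
  have hT : ({x1}ᶜ : Finset (Fin s)).card = s - 1 := by
    rw [card_compl_singleton, Fintype.card_fin]
  rw [bernoulliPMF, dif_pos (ENNReal.ofReal_le_one.2 (ssp_le_one hd.le)), PMF.bind_apply,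
    tsum_bool]
  simp only [PMF.bernoulli_apply, cond_false, cond_true, Bool.false_eq_true, if_false, if_true]
  rw [bind_map_union_uniformPowersetCard (Nat.sub_le _ _) (by omega),
    bind_map_insert_union_uniformPowersetCard (by simp) (by omega) (by omega),
    uniformPowersetCard_compl_singleton_apply x1 (by rwa [Fintype.card_fin]),
    map_insert_uniformPowersetCard_compl_singleton_apply x1 (by rw [Fintype.card_fin]; omega),
    Nat.sub_add_cancel (by omega : 1 ≤ ssD s ε), Fintype.card_fin, ofReal_ssP hd]
  rfl
end
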